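/- Let D ≥ 2 and let W_1, …, W_D be mutually independent random variables taking values in finite sets, and let S be any random variable taking values in a finite set, all on a common probability space. Then the sum over all ordered pairs (d_1, d_2) with d_1, d_2 ∈ {1,…,D} and d_1 ≠ d_2 of the mutual informations I((W_{d_1}, W_{d_2}); S) is at most (2D−1)·H(S). -/
import Mathlib


open scoped BigOperators

namespace InfoTheory

/-- The distribution of a random variable `X` on a finite sample space with
probability mass function `P`. -/
noncomputable def dist {Ω A : Type*} [Fintype Ω] [DecidableEq A]
    (P : Ω → ℝ) (X : Ω → A) (a : A) : ℝ :=
  ∑ ω, if X ω = a then P ω else 0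

/-- Shannon entropy `H(X) = -Σ_x P(X=x) log P(X=x)` of a finite-valued random
variable on a finite sample space with probability mass function `P`. -/
noncomputable def entropy {Ω A : Type*} [Fintype Ω] [Fintype A] [DecidableEq A]
    (P : Ω → ℝ) (X : Ω → A) : ℝ :=
  -∑ a : A, dist P X a * Real.log (dist P X a)

/-- Mutual information `I(X;Y) = H(X) + H(Y) - H(X,Y)`. -/
noncomputable def mutInfo {Ω A B : Type*} [Fintype Ω] [Fintype A] [Fintype B]
    [DecidableEq A] [DecidableEq B] (P : Ω → ℝ) (X : Ω → A) (Y : Ω → B) : ℝ :=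
  entropy P X + entropy P Y - entropy P (fun ω => (X ω, Y ω))

/-- Conditional mutual information
`I(X;Y|Z) = H(X,Z) + H(Y,Z) - H(X,Y,Z) - H(Z)`. -/
noncomputable def condMutInfo {Ω A B C : Type*} [Fintype Ω] [Fintype A] [Fintype B]
    [Fintype C] [DecidableEq A] [DecidableEq B] [DecidableEq C]
    (P : Ω → ℝ) (X : Ω → A) (Y : Ω → B) (Z : Ω → C) : ℝ :=
  entropy P (fun ω => (X ω, Z ω)) + entropy P (fun ω => (Y ω, Z ω))
    - entropy P (fun ω => (X ω, Y ω, Z ω)) - entropy P Z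

end InfoTheory

namespace InfoTheory

variable {Ω A B C : Type*} [Fintype Ω]

lemma dist_nonneg [DecidableEq A] {P : Ω → ℝ} (hP0 : ∀ ω, 0 ≤ P ω) (X : Ω → A) (a : A) :
    0 ≤ dist P X a :=
  Finset.sum_nonneg fun ω _ => by by_cases h : X ω = a <;> simp [dist, h, hP0 ω]

lemma sum_dist [Fintype A] [DecidableEq A] {P : Ω → ℝ} (hP1 : ∑ ω, P ω = 1)
    (X : Ω → A) : ∑ a, dist P X a = 1 := by
  rw [← hP1]
  unfold dist
  rw [Finset.sum_comm]
  refine Finset.sum_congr rfl fun ω _ => ?_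
  simp

lemma dist_comp [Fintype A] [DecidableEq A] [DecidableEq B] (P : Ω → ℝ) (X : Ω → A)
    (g : A → B) (b : B) :
    dist P (fun ω => g (X ω)) b = ∑ a, if g a = b then dist P X a else 0 := by
  unfold dist
  have : ∀ a : A, (if g a = b then (∑ ω, if X ω = a then P ω else 0) else 0)
      = ∑ ω, if X ω = a then (if g a = b then P ω else 0) else 0 := by
    intro a
    split_ifs with h <;> simp [h]
  simp_rw [this]
  rw [Finset.sum_comm]
  refine Finset.sum_congr rfl fun ω _ => ?_
  rw [Finset.sum_ite_eq]
  simp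

lemma dist_comp_inj [DecidableEq A] [DecidableEq B] (P : Ω → ℝ) (X : Ω → A)
    {g : A → B} (hg : Function.Injective g) (a : A) :
    dist P (fun ω => g (X ω)) (g a) = dist P X a := by
  unfold dist
  refine Finset.sum_congr rfl fun ω _ => ?_
  simp [hg.eq_iff]


lemma dist_comp_eq_zero [DecidableEq A] [DecidableEq B] (P : Ω → ℝ) (X : Ω → A)
    (g : A → B) {b : B} (hb : ∀ a, g a ≠ b) :
    dist P (fun ω => g (X ω)) b = 0 := by
  unfold dist
  refine Finset.sum_eq_zero fun ω _ => by simp [hb (X ω)]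

lemma entropy_comp_inj [Fintype A] [DecidableEq A] [Fintype B] [DecidableEq B]
    (P : Ω → ℝ) (X : Ω → A) {g : A → B} (hg : Function.Injective g) :
    entropy P (fun ω => g (X ω)) = entropy P X := by
  unfold entropy
  congr 1
  set F := fun b => dist P (fun ω => g (X ω)) b * Real.log (dist P (fun ω => g (X ω)) b)
    with hF
  have h2 : ∑ b : B, F b = ∑ b ∈ Finset.univ.image g, F b := by
    refine (Finset.sum_subset (Finset.subset_univ _) ?_).symm
    intro b _ hb
    have hb' : ∀ a, g a ≠ b := by
      intro a ha
      exact hb (Finset.mem_image.2 ⟨a, Finset.mem_univ a, ha⟩)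
    simp [F, dist_comp_eq_zero P X g hb']
  rw [h2, Finset.sum_image (fun a _ b _ h => hg h)]
  refine Finset.sum_congr rfl fun a _ => ?_
  simp only [F, dist_comp_inj P X hg]

lemma entropy_comp_le [Fintype A] [DecidableEq A] [Fintype B] [DecidableEq B]
    {P : Ω → ℝ} (hP0 : ∀ ω, 0 ≤ P ω) (X : Ω → A) (g : A → B) :
    entropy P (fun ω => g (X ω)) ≤ entropy P X := by
  unfold entropy
  rw [neg_le_neg_iff]
  have key : ∀ b : B, dist P (fun ω => g (X ω)) b * Real.log (dist P (fun ω => g (X ω)) b)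
      = ∑ a, if g a = b then dist P X a * Real.log (dist P (fun ω => g (X ω)) b) else 0 := by
    intro b
    rw [dist_comp, Finset.sum_mul]
    refine Finset.sum_congr rfl fun a _ => ?_
    rw [ite_mul, zero_mul]
  calc ∑ a : A, dist P X a * Real.log (dist P X a)
      ≤ ∑ a : A, dist P X a * Real.log (dist P (fun ω => g (X ω)) (g a)) := by
        refine Finset.sum_le_sum fun a _ => ?_
        rcases eq_or_lt_of_le (dist_nonneg hP0 X a) with h0 | h0
        · rw [← h0]; simp
        · have hle : dist P X a ≤ dist P (fun ω => g (X ω)) (g a) := by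
            rw [dist_comp P X g (g a)]
            have := Finset.single_le_sum
              (f := fun a' => if g a' = g a then dist P X a' else 0)
              (fun a' _ => by by_cases h : g a' = g a <;> simp [h, dist_nonneg hP0 X a'])
              (Finset.mem_univ a)
            simpa using this
          exact mul_le_mul_of_nonneg_left (Real.log_le_log h0 hle) h0.le
    _ = ∑ b : B, dist P (fun ω => g (X ω)) b * Real.log (dist P (fun ω => g (X ω)) b) := by
        simp_rw [key]
        rw [Finset.sum_comm]
        refine Finset.sum_congr rfl fun a _ => ?_
        rw [Finset.sum_ite_eq]
        simp


section CMI

variable [Fintype A] [DecidableEq A] [Fintype B] [DecidableEq B] [Fintype C] [DecidableEq C]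
variable {P : Ω → ℝ} (hP0 : ∀ ω, 0 ≤ P ω) (hP1 : ∑ ω, P ω = 1)
variable (X : Ω → A) (Y : Ω → B) (Z : Ω → C)

-- marginal lemmas
lemma marg_XZ (x : A) (z : C) :
    dist P (fun ω => (X ω, Z ω)) (x, z)
      = ∑ y, dist P (fun ω => (X ω, Y ω, Z ω)) (x, y, z) := by
  unfold dist
  rw [Finset.sum_comm]
  refine Finset.sum_congr rfl fun ω _ => ?_
  by_cases hx : X ω = x <;> by_cases hz : Z ω = z <;> simp [Prod.ext_iff, hx, hz]

lemma marg_YZ (y : B) (z : C) :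
    dist P (fun ω => (Y ω, Z ω)) (y, z)
      = ∑ x, dist P (fun ω => (X ω, Y ω, Z ω)) (x, y, z) := by
  unfold dist
  rw [Finset.sum_comm]
  refine Finset.sum_congr rfl fun ω _ => ?_
  by_cases hy : Y ω = y <;> by_cases hz : Z ω = z <;> simp [Prod.ext_iff, hy, hz]

lemma marg_Z (z : C) :
    dist P Z z = ∑ x, ∑ y, dist P (fun ω => (X ω, Y ω, Z ω)) (x, y, z) := by
  unfold dist
  refine Eq.symm ?_
  calc ∑ x, ∑ y, ∑ ω, (if (X ω, Y ω, Z ω) = (x, y, z) then P ω else 0)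
      = ∑ x, ∑ ω, ∑ y, (if (X ω, Y ω, Z ω) = (x, y, z) then P ω else 0) :=
        Finset.sum_congr rfl fun x _ => Finset.sum_comm
    _ = ∑ ω, ∑ x, ∑ y, (if (X ω, Y ω, Z ω) = (x, y, z) then P ω else 0) :=
        Finset.sum_comm
    _ = ∑ ω, (if Z ω = z then P ω else 0) := by
        refine Finset.sum_congr rfl fun ω _ => ?_
        by_cases hz : Z ω = z <;> simp [Prod.ext_iff, hz, ite_and, Finset.sum_ite_eq]

theorem condMutInfo_nonneg (hP0 : ∀ ω, 0 ≤ P ω) (hP1 : ∑ ω, P ω = 1) :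
    0 ≤ condMutInfo P X Y Z := by
  classical
  set p : A × B × C → ℝ := dist P (fun ω => (X ω, Y ω, Z ω)) with hp
  set q1 : A × C → ℝ := dist P (fun ω => (X ω, Z ω)) with hq1
  set q2 : B × C → ℝ := dist P (fun ω => (Y ω, Z ω)) with hq2
  set qZ : C → ℝ := dist P Z with hqZ
  have hm1 : ∀ x z, q1 (x, z) = ∑ y, p (x, y, z) := fun x z => marg_XZ X Y Z x z
  have hm2 : ∀ y z, q2 (y, z) = ∑ x, p (x, y, z) := fun y z => marg_YZ X Y Z y z
  have hm3 : ∀ z, qZ z = ∑ x, ∑ y, p (x, y, z) := fun z => marg_Z X Y Z z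
  have hp0 : ∀ t, 0 ≤ p t := fun t => dist_nonneg hP0 _ t
  have hq10 : ∀ u, 0 ≤ q1 u := fun u => dist_nonneg hP0 _ u
  have hq20 : ∀ u, 0 ≤ q2 u := fun u => dist_nonneg hP0 _ u
  have hqZ0 : ∀ z, 0 ≤ qZ z := fun z => dist_nonneg hP0 _ z
  -- entropies as triple sums
  have hXZ : entropy P (fun ω => (X ω, Z ω))
      = -∑ x, ∑ y, ∑ z, p (x, y, z) * Real.log (q1 (x, z)) := by
    unfold entropy
    rw [← hq1]
    congr 1
    rw [Fintype.sum_prod_type]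
    refine Finset.sum_congr rfl fun x _ => ?_
    calc ∑ z, q1 (x, z) * Real.log (q1 (x, z))
        = ∑ z, ∑ y, p (x, y, z) * Real.log (q1 (x, z)) := by
          refine Finset.sum_congr rfl fun z _ => ?_
          rw [hm1, Finset.sum_mul]
      _ = ∑ y, ∑ z, p (x, y, z) * Real.log (q1 (x, z)) := Finset.sum_comm
  have hYZ : entropy P (fun ω => (Y ω, Z ω))
      = -∑ x, ∑ y, ∑ z, p (x, y, z) * Real.log (q2 (y, z)) := by
    unfold entropy
    rw [← hq2]
    congr 1
    rw [Fintype.sum_prod_type]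
    calc ∑ y, ∑ z, q2 (y, z) * Real.log (q2 (y, z))
        = ∑ y, ∑ z, ∑ x, p (x, y, z) * Real.log (q2 (y, z)) := by
          refine Finset.sum_congr rfl fun y _ => Finset.sum_congr rfl fun z _ => ?_
          rw [hm2, Finset.sum_mul]
      _ = ∑ y, ∑ x, ∑ z, p (x, y, z) * Real.log (q2 (y, z)) :=
          Finset.sum_congr rfl fun y _ => Finset.sum_comm
      _ = ∑ x, ∑ y, ∑ z, p (x, y, z) * Real.log (q2 (y, z)) := Finset.sum_comm
  have hZ : entropy P Z = -∑ x, ∑ y, ∑ z, p (x, y, z) * Real.log (qZ z) := by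
    unfold entropy
    rw [← hqZ]
    congr 1
    calc ∑ z, qZ z * Real.log (qZ z)
        = ∑ z, ∑ x, ∑ y, p (x, y, z) * Real.log (qZ z) := by
          refine Finset.sum_congr rfl fun z _ => ?_
          rw [hm3, Finset.sum_mul]
          exact Finset.sum_congr rfl fun x _ => (Finset.sum_mul _ _ _)
      _ = ∑ x, ∑ z, ∑ y, p (x, y, z) * Real.log (qZ z) := Finset.sum_comm
      _ = ∑ x, ∑ y, ∑ z, p (x, y, z) * Real.log (qZ z) :=
          Finset.sum_congr rfl fun x _ => Finset.sum_comm
  have hXYZ : entropy P (fun ω => (X ω, Y ω, Z ω))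
      = -∑ x, ∑ y, ∑ z, p (x, y, z) * Real.log (p (x, y, z)) := by
    unfold entropy
    rw [← hp]
    congr 1
    rw [Fintype.sum_prod_type]
    exact Finset.sum_congr rfl fun x _ => Fintype.sum_prod_type _
  -- the key sum inequality
  have hq1s : ∀ z, ∑ x, q1 (x, z) = qZ z := by
    intro z
    rw [hm3]
    exact Finset.sum_congr rfl fun x _ => hm1 x z
  have hq2s : ∀ z, ∑ y, q2 (y, z) = qZ z := by
    intro z
    rw [hm3, Finset.sum_comm]
    exact Finset.sum_congr rfl fun y _ => hm2 y z
  have hptot : ∑ x, ∑ y, ∑ z, p (x, y, z) = 1 := by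
    rw [← sum_dist hP1 (fun ω => (X ω, Y ω, Z ω)), ← hp, Fintype.sum_prod_type]
    exact Finset.sum_congr rfl fun x _ =>
      (Fintype.sum_prod_type (f := fun u : B × C => p (x, u))).symm
  have hrtot : ∑ x, ∑ y, ∑ z, q1 (x, z) * q2 (y, z) / qZ z ≤ 1 := by
    have hswap : ∑ x, ∑ y, ∑ z, q1 (x, z) * q2 (y, z) / qZ z
        = ∑ z, ∑ x, ∑ y, q1 (x, z) * q2 (y, z) / qZ z := by
      calc ∑ x, ∑ y, ∑ z, q1 (x, z) * q2 (y, z) / qZ z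
          = ∑ x, ∑ z, ∑ y, q1 (x, z) * q2 (y, z) / qZ z :=
            Finset.sum_congr rfl fun x _ => Finset.sum_comm
        _ = ∑ z, ∑ x, ∑ y, q1 (x, z) * q2 (y, z) / qZ z := Finset.sum_comm
    rw [hswap, ← sum_dist hP1 Z, ← hqZ]
    refine Finset.sum_le_sum fun z _ => ?_
    have : ∑ x, ∑ y, q1 (x, z) * q2 (y, z) / qZ z = qZ z * (qZ z / qZ z) := by
      calc ∑ x, ∑ y, q1 (x, z) * q2 (y, z) / qZ z
          = ∑ x, q1 (x, z) * ((∑ y, q2 (y, z)) / qZ z) := by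
            refine Finset.sum_congr rfl fun x _ => ?_
            rw [Finset.sum_div, Finset.mul_sum]
            exact Finset.sum_congr rfl fun y _ => mul_div_assoc _ _ _
        _ = (∑ x, q1 (x, z)) * ((∑ y, q2 (y, z)) / qZ z) := by rw [Finset.sum_mul]
        _ = qZ z * (qZ z / qZ z) := by rw [hq1s, hq2s]
    rw [this]
    rcases eq_or_lt_of_le (hqZ0 z) with h0 | h0
    · rw [← h0]; simp
    · rw [div_self h0.ne', mul_one]
  have hterm : ∀ x y z, p (x, y, z) - q1 (x, z) * q2 (y, z) / qZ z
      ≤ p (x, y, z) * Real.log (p (x, y, z)) + p (x, y, z) * Real.log (qZ z)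
        - p (x, y, z) * Real.log (q1 (x, z)) - p (x, y, z) * Real.log (q2 (y, z)) := by
    intro x y z
    rcases eq_or_lt_of_le (hp0 (x, y, z)) with h0 | h0
    · have hr : 0 ≤ q1 (x, z) * q2 (y, z) / qZ z :=
        div_nonneg (mul_nonneg (hq10 _) (hq20 _)) (hqZ0 _)
      rw [← h0]
      simp only [zero_mul, zero_sub, zero_add, add_zero, sub_zero]
      linarith
    · have hq1p : 0 < q1 (x, z) := by
        refine lt_of_lt_of_le h0 ?_
        rw [hm1]
        exact Finset.single_le_sum (f := fun y' => p (x, y', z))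
          (fun y' _ => hp0 _) (Finset.mem_univ y)
      have hq2p : 0 < q2 (y, z) := by
        refine lt_of_lt_of_le h0 ?_
        rw [hm2]
        exact Finset.single_le_sum (f := fun x' => p (x', y, z))
          (fun x' _ => hp0 _) (Finset.mem_univ x)
      have hqZp : 0 < qZ z := by
        refine lt_of_lt_of_le h0 ?_
        rw [hm3]
        calc p (x, y, z) ≤ ∑ y', p (x, y', z) :=
              Finset.single_le_sum (f := fun y' => p (x, y', z))
                (fun y' _ => hp0 _) (Finset.mem_univ y)
          _ ≤ ∑ x', ∑ y', p (x', y', z) :=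
              Finset.single_le_sum (f := fun x' => ∑ y', p (x', y', z))
                (fun x' _ => Finset.sum_nonneg fun y' _ => hp0 _)
                (Finset.mem_univ x)
      have hlog := Real.log_le_sub_one_of_pos
        (show 0 < q1 (x, z) * q2 (y, z) / (p (x, y, z) * qZ z) from
          div_pos (mul_pos hq1p hq2p) (mul_pos h0 hqZp))
      have hlogeq : Real.log (q1 (x, z) * q2 (y, z) / (p (x, y, z) * qZ z))
          = Real.log (q1 (x, z)) + Real.log (q2 (y, z)) - Real.log (p (x, y, z))
            - Real.log (qZ z) := by
        rw [Real.log_div (by positivity) (by positivity),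
          Real.log_mul hq1p.ne' hq2p.ne', Real.log_mul h0.ne' hqZp.ne']
        ring
      have hmul := mul_le_mul_of_nonneg_left hlog h0.le
      have heq2 : p (x, y, z) * (q1 (x, z) * q2 (y, z) / (p (x, y, z) * qZ z) - 1)
          = q1 (x, z) * q2 (y, z) / qZ z - p (x, y, z) := by
        field_simp
      rw [hlogeq, heq2] at hmul
      linarith [hmul]
  -- put it together
  have hsum : ∑ x, ∑ y, ∑ z, (p (x, y, z) - q1 (x, z) * q2 (y, z) / qZ z)
      ≤ ∑ x, ∑ y, ∑ z, (p (x, y, z) * Real.log (p (x, y, z))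
          + p (x, y, z) * Real.log (qZ z) - p (x, y, z) * Real.log (q1 (x, z))
          - p (x, y, z) * Real.log (q2 (y, z))) := by
    refine Finset.sum_le_sum fun x _ => Finset.sum_le_sum fun y _ =>
      Finset.sum_le_sum fun z _ => hterm x y z
  have hsplit1 : ∑ x, ∑ y, ∑ z, (p (x, y, z) - q1 (x, z) * q2 (y, z) / qZ z)
      = (∑ x, ∑ y, ∑ z, p (x, y, z)) - ∑ x, ∑ y, ∑ z, q1 (x, z) * q2 (y, z) / qZ z := by
    simp only [Finset.sum_sub_distrib]
  have hsplit2 : ∑ x, ∑ y, ∑ z, (p (x, y, z) * Real.log (p (x, y, z))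
          + p (x, y, z) * Real.log (qZ z) - p (x, y, z) * Real.log (q1 (x, z))
          - p (x, y, z) * Real.log (q2 (y, z)))
      = (∑ x, ∑ y, ∑ z, p (x, y, z) * Real.log (p (x, y, z)))
        + (∑ x, ∑ y, ∑ z, p (x, y, z) * Real.log (qZ z))
        - (∑ x, ∑ y, ∑ z, p (x, y, z) * Real.log (q1 (x, z)))
        - (∑ x, ∑ y, ∑ z, p (x, y, z) * Real.log (q2 (y, z))) := by
    simp only [Finset.sum_sub_distrib, Finset.sum_add_distrib]
  unfold condMutInfo
  rw [hXZ, hYZ, hXYZ, hZ]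
  rw [hsplit1, hsplit2, hptot] at hsum
  linarith

end CMI

section Mid
variable [Fintype A] [DecidableEq A] [Fintype B] [DecidableEq B] [Fintype C] [DecidableEq C]
variable {P : Ω → ℝ}

lemma entropy_unit (hP1 : ∑ ω, P ω = 1) : entropy P (fun _ : Ω => ()) = 0 := by
  unfold entropy dist
  simp [hP1]

lemma mutInfo_nonneg (hP0 : ∀ ω, 0 ≤ P ω) (hP1 : ∑ ω, P ω = 1)
    (X : Ω → A) (Y : Ω → B) : 0 ≤ mutInfo P X Y := by
  have h := condMutInfo_nonneg X Y (fun _ => ()) hP0 hP1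
  unfold condMutInfo at h
  unfold mutInfo
  have e1 : entropy P (fun ω => (X ω, ())) = entropy P X :=
    entropy_comp_inj P X (g := fun a => (a, ())) fun a b h => by
      simpa using congrArg Prod.fst h
  have e2 : entropy P (fun ω => (Y ω, ())) = entropy P Y :=
    entropy_comp_inj P Y (g := fun a => (a, ())) fun a b h => by
      simpa using congrArg Prod.fst h
  have e3 : entropy P (fun ω => (X ω, Y ω, ())) = entropy P (fun ω => (X ω, Y ω)) :=
    entropy_comp_inj P (fun ω => (X ω, Y ω)) (g := fun u : A × B => (u.1, u.2, ()))
      fun a b h => by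
        have h1 := congrArg Prod.fst h
        have h2 := congrArg (fun t => t.2.1) h
        simp at h1 h2
        exact Prod.ext h1 h2
  rw [e1, e2, e3, entropy_unit hP1] at h
  linarith

lemma mutInfo_le_entropy_right (hP0 : ∀ ω, 0 ≤ P ω) (X : Ω → A) (S : Ω → B) :
    mutInfo P X S ≤ entropy P S := by
  unfold mutInfo
  have h : entropy P X ≤ entropy P (fun ω => (X ω, S ω)) :=
    entropy_comp_le hP0 (fun ω => (X ω, S ω)) Prod.fst
  linarith

lemma entropy_pair_indep (hP1 : ∑ ω, P ω = 1) {X : Ω → A} {Y : Ω → B}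
    (hind : ∀ a b, dist P (fun ω => (X ω, Y ω)) (a, b) = dist P X a * dist P Y b) :
    entropy P (fun ω => (X ω, Y ω)) = entropy P X + entropy P Y := by
  have key : ∀ a b, dist P (fun ω => (X ω, Y ω)) (a, b)
        * Real.log (dist P (fun ω => (X ω, Y ω)) (a, b))
      = dist P Y b * (dist P X a * Real.log (dist P X a))
        + dist P X a * (dist P Y b * Real.log (dist P Y b)) := by
    intro a b
    rw [hind]
    by_cases hx : dist P X a = 0
    · simp [hx]
    · by_cases hy : dist P Y b = 0
      · simp [hy]
      · rw [Real.log_mul hx hy]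
        ring
  unfold entropy
  rw [Fintype.sum_prod_type]
  simp_rw [key, Finset.sum_add_distrib]
  have h1 : ∀ a, ∑ b, dist P Y b * (dist P X a * Real.log (dist P X a))
      = dist P X a * Real.log (dist P X a) := by
    intro a
    rw [← Finset.sum_mul, sum_dist hP1, one_mul]
  have h2 : ∀ a, ∑ b, dist P X a * (dist P Y b * Real.log (dist P Y b))
      = dist P X a * ∑ b, dist P Y b * Real.log (dist P Y b) := by
    intro a
    rw [Finset.mul_sum]
  simp_rw [h1, h2]
  rw [← Finset.sum_mul, sum_dist hP1, one_mul]
  ring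

lemma mutInfo_of_indep (hP1 : ∑ ω, P ω = 1) {X : Ω → A} {Y : Ω → B}
    (hind : ∀ a b, dist P (fun ω => (X ω, Y ω)) (a, b) = dist P X a * dist P Y b) :
    mutInfo P X Y = 0 := by
  unfold mutInfo
  rw [entropy_pair_indep hP1 hind]
  ring

lemma mutInfo_superadd (hP0 : ∀ ω, 0 ≤ P ω) (hP1 : ∑ ω, P ω = 1)
    {X : Ω → A} {Y : Ω → B}
    (hind : ∀ a b, dist P (fun ω => (X ω, Y ω)) (a, b) = dist P X a * dist P Y b)
    (S : Ω → C) :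
    mutInfo P X S + mutInfo P Y S ≤ mutInfo P (fun ω => (X ω, Y ω)) S := by
  have h := condMutInfo_nonneg X Y S hP0 hP1
  unfold condMutInfo at h
  unfold mutInfo
  have hassoc : entropy P (fun ω => ((X ω, Y ω), S ω))
      = entropy P (fun ω => (X ω, Y ω, S ω)) :=
    entropy_comp_inj P (fun ω => (X ω, Y ω, S ω))
      (g := fun t : A × B × C => ((t.1, t.2.1), t.2.2)) fun a b hh => by
        have h1 := congrArg (fun t => t.1.1) hh
        have h2 := congrArg (fun t => t.1.2) hh
        have h3 := congrArg (fun t => t.2) hh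
        simp at h1 h2 h3
        exact Prod.ext h1 (Prod.ext h2 h3)
  rw [entropy_pair_indep hP1 hind, hassoc]
  linarith

lemma indep_swap {X : Ω → A} {Y : Ω → B}
    (h : ∀ a b, dist P (fun ω => (X ω, Y ω)) (a, b) = dist P X a * dist P Y b) :
    ∀ b a, dist P (fun ω => (Y ω, X ω)) (b, a) = dist P Y b * dist P X a := by
  intro b a
  have e : dist P (fun ω => (Y ω, X ω)) (b, a)
      = dist P (fun ω => (X ω, Y ω)) (a, b) :=
    dist_comp_inj P (fun ω => (X ω, Y ω)) (g := Prod.swap) Prod.swap_injective (a, b)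
  rw [e, h]
  ring

lemma mutInfo_comp_inj_left {g : A → B} (hg : Function.Injective g)
    (X : Ω → A) (S : Ω → C) :
    mutInfo P (fun ω => g (X ω)) S = mutInfo P X S := by
  unfold mutInfo
  have e1 : entropy P (fun ω => g (X ω)) = entropy P X := entropy_comp_inj P X hg
  have e2 : entropy P (fun ω => (g (X ω), S ω)) = entropy P (fun ω => (X ω, S ω)) :=
    entropy_comp_inj P (fun ω => (X ω, S ω)) (g := Prod.map g id)
      (hg.prodMap Function.injective_id)
  rw [e1, e2]

lemma mutInfo_pair_le (hP0 : ∀ ω, 0 ≤ P ω) (hP1 : ∑ ω, P ω = 1)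
    {X : Ω → A} {Y : Ω → B} (S : Ω → C)
    (hind : ∀ a b, dist P (fun ω => (X ω, Y ω)) (a, b) = dist P X a * dist P Y b) :
    mutInfo P X (fun ω => (S ω, Y ω)) ≤ entropy P S := by
  unfold mutInfo
  have h1 := mutInfo_nonneg hP0 hP1 S Y
  unfold mutInfo at h1
  have h2 : entropy P (fun ω => (X ω, Y ω)) ≤ entropy P (fun ω => (X ω, (S ω, Y ω))) :=
    entropy_comp_le hP0 (fun ω => (X ω, (S ω, Y ω))) (fun t => (t.1, t.2.2))
  have h3 : entropy P (fun ω => (X ω, Y ω)) = entropy P X + entropy P Y :=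
    entropy_pair_indep hP1 hind
  linarith

lemma mutInfo_pair_decomp (hP1 : ∑ ω, P ω = 1) {X : Ω → A} {Y : Ω → B} (S : Ω → C)
    (hind : ∀ a b, dist P (fun ω => (X ω, Y ω)) (a, b) = dist P X a * dist P Y b) :
    mutInfo P (fun ω => (X ω, Y ω)) S
      = mutInfo P X S + mutInfo P Y (fun ω => (S ω, X ω)) := by
  unfold mutInfo
  have e1 : entropy P (fun ω => (S ω, X ω)) = entropy P (fun ω => (X ω, S ω)) :=
    entropy_comp_inj P (fun ω => (X ω, S ω)) (g := Prod.swap) Prod.swap_injective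
  have eA : entropy P (fun ω => (Y ω, (S ω, X ω)))
      = entropy P (fun ω => (X ω, Y ω, S ω)) :=
    entropy_comp_inj P (fun ω => (X ω, Y ω, S ω))
      (g := fun t : A × B × C => (t.2.1, (t.2.2, t.1))) (by
        intro u u' h
        simp only [Prod.mk.injEq] at h
        obtain ⟨h1, h2, h3⟩ := h
        exact Prod.ext (by assumption) (Prod.ext (by assumption) (by assumption)))
  have eB : entropy P (fun ω => ((X ω, Y ω), S ω))
      = entropy P (fun ω => (X ω, Y ω, S ω)) :=
    entropy_comp_inj P (fun ω => (X ω, Y ω, S ω))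
      (g := fun t : A × B × C => ((t.1, t.2.1), t.2.2)) (by
        intro u u' h
        simp only [Prod.mk.injEq] at h
        obtain ⟨⟨h1, h2⟩, h3⟩ := h
        exact Prod.ext (by assumption) (Prod.ext (by assumption) (by assumption)))
  rw [entropy_pair_indep hP1 hind, e1, eA, eB]
  ring


end Mid

section Tuple
variable {D : ℕ} {A : Fin D → Type*} [instF : ∀ i, Fintype (A i)] [∀ i, DecidableEq (A i)]
variable {P : Ω → ℝ}

/-- Censor a tuple outside `T`, replacing entries by defaults. -/
def cens (df : ∀ i, A i) (T : Finset (Fin D)) (w : ∀ i, A i) : ∀ i, A i :=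
  fun i => if i ∈ T then w i else df i

lemma dist_cens_vanish (df : ∀ i, A i) (T : Finset (Fin D)) (W : ∀ i, Ω → A i)
    {v : ∀ i, A i} (hv : ¬ ∀ i, i ∉ T → v i = df i) :
    dist P (fun ω => cens df T (fun i => W i ω)) v = 0 := by
  unfold dist
  refine Finset.sum_eq_zero fun ω _ => ?_
  rw [if_neg]
  intro h
  refine hv fun i hi => ?_
  rw [← h]
  simp [cens, hi]

include instF in
lemma dist_cens (hP1 : ∑ ω, P ω = 1) (W : ∀ i, Ω → A i)
    (hindep : ∀ w : ∀ i, A i,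
      dist P (fun ω => fun i => W i ω) w = ∏ i, dist P (W i) (w i))
    (df : ∀ i, A i) :
    ∀ (T : Finset (Fin D)) (v : ∀ i, A i), (∀ i, i ∉ T → v i = df i) →
      dist P (fun ω => cens df T (fun i => W i ω)) v = ∏ i ∈ T, dist P (W i) (v i) := by
  suffices h : ∀ (Cpl : Finset (Fin D)) (T : Finset (Fin D)), T = Finset.univ \ Cpl →
      ∀ v, (∀ i, i ∉ T → v i = df i) →
      dist P (fun ω => cens df T (fun i => W i ω)) v = ∏ i ∈ T, dist P (W i) (v i) by
    intro T v hv
    refine h (Finset.univ \ T) T ?_ v hv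
    simp
  intro Cpl
  induction Cpl using Finset.induction_on with
  | empty =>
    intro T hT v hv
    have hT' : T = Finset.univ := by simpa using hT
    subst hT'
    have hfun : (fun ω => cens df Finset.univ (fun i => W i ω))
        = (fun ω => fun i => W i ω) := by
      funext ω i
      simp [cens]
    rw [hfun, hindep v]
  | @insert b Cpl' hb ih =>
    intro T hT v hv
    have hbT : b ∉ T := by
      rw [hT]
      simp
    have hins : insert b T = Finset.univ \ Cpl' := by
      rw [hT, Finset.sdiff_insert, Finset.insert_erase]
      simp [hb]
    have hvb : v b = df b := hv b hbT
    -- step 1 : marginalize out coordinate b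
    have hcomp : (fun ω => cens df T (fun i => W i ω))
        = fun ω => (fun u => Function.update u b (df b))
            (cens df (insert b T) (fun i => W i ω)) := by
      funext ω i
      by_cases hib : i = b
      · subst hib
        simp [cens, hbT]
      · simp [cens, Function.update_of_ne hib, Finset.mem_insert, hib]
    have step1 : dist P (fun ω => cens df T (fun i => W i ω)) v
        = ∑ x : A b, dist P (fun ω => cens df (insert b T) (fun i => W i ω))
            (Function.update v b x) := by
      rw [hcomp, dist_comp P (fun ω => cens df (insert b T) fun i => W i ω)
        (fun u => Function.update u b (df b)) v, ← Finset.sum_filter]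
      have hrec : ∀ u : ∀ i, A i, Function.update u b (df b) = v →
          Function.update v b (u b) = u := by
        intro u hu
        funext i
        by_cases hib : i = b
        · subst hib
          rw [Function.update_self]
        · rw [Function.update_of_ne hib, ← hu, Function.update_of_ne hib]
      refine Finset.sum_bij' (i := fun u _ => u b)
        (j := fun x _ => Function.update v b x) ?_ ?_ ?_ ?_ ?_
      · intro u hu
        exact Finset.mem_univ _
      · intro x hx
        show Function.update v b x ∈ _
        rw [Finset.mem_filter]
        refine ⟨Finset.mem_univ _, ?_⟩
        rw [Function.update_idem, ← hvb, Function.update_eq_self]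
      · intro u hu
        show Function.update v b (u b) = u
        exact hrec u (Finset.mem_filter.mp hu).2
      · intro x hx
        show Function.update v b x b = x
        rw [Function.update_self]
      · intro u hu
        show _ = dist P (fun ω => cens df (insert b T) fun i => W i ω)
          (Function.update v b (u b))
        rw [hrec u (Finset.mem_filter.mp hu).2]
    rw [step1]
    -- step 2 : apply the inductive hypothesis
    have step2 : ∀ x : A b,
        dist P (fun ω => cens df (insert b T) (fun i => W i ω)) (Function.update v b x)
          = dist P (W b) x * ∏ i ∈ T, dist P (W i) (v i) := by
      intro x
      rw [ih (insert b T) hins (Function.update v b x) ?_]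
      · rw [Finset.prod_insert hbT, Function.update_self]
        congr 1
        refine Finset.prod_congr rfl fun i hi => ?_
        rw [Function.update_of_ne (fun hib => hbT (by rw [← hib]; exact hi))]
      · intro i hi
        have hib : i ≠ b := fun hib => hi (hib ▸ Finset.mem_insert_self b T)
        rw [Function.update_of_ne hib]
        exact hv i fun hiT => hi (Finset.mem_insert_of_mem hiT)
    simp_rw [step2]
    rw [← Finset.sum_mul, sum_dist hP1, one_mul]

lemma update_pair_inj (df : ∀ i, A i) (a : Fin D) :
    Function.Injective (fun u : ∀ i, A i => (u a, Function.update u a (df a))) := by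
  intro u u' h
  have h1 : u a = u' a := congrArg Prod.fst h
  have h2 : Function.update u a (df a) = Function.update u' a (df a) :=
    congrArg Prod.snd h
  funext i
  by_cases hia : i = a
  · subst hia
    exact h1
  · have := congrFun h2 i
    rwa [Function.update_of_ne hia, Function.update_of_ne hia] at this

lemma cens_insert (df : ∀ i, A i) (W : ∀ i, Ω → A i) {a : Fin D} {T : Finset (Fin D)}
    (ha : a ∉ T) :
    (fun ω => (W a ω, cens df T (fun i => W i ω)))
      = fun ω => (fun u : ∀ i, A i => (u a, Function.update u a (df a)))
          (cens df (insert a T) (fun i => W i ω)) := by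
  funext ω
  refine Prod.ext ?_ ?_
  · show W a ω = cens df (insert a T) (fun i => W i ω) a
    simp [cens]
  · show cens df T (fun i => W i ω)
      = Function.update (cens df (insert a T) (fun i => W i ω)) a (df a)
    funext i
    by_cases hia : i = a
    · subst hia
      simp [cens, ha]
    · rw [Function.update_of_ne hia]
      simp [cens, Finset.mem_insert, hia]

include instF in
lemma indep_W_cens (hP1 : ∑ ω, P ω = 1) (W : ∀ i, Ω → A i)
    (hindep : ∀ w : ∀ i, A i,
      dist P (fun ω => fun i => W i ω) w = ∏ i, dist P (W i) (w i))
    (df : ∀ i, A i) {a : Fin D} {T : Finset (Fin D)} (ha : a ∉ T) :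
    ∀ (x : A a) (v : ∀ i, A i),
      dist P (fun ω => (W a ω, cens df T (fun i => W i ω))) (x, v)
        = dist P (W a) x * dist P (fun ω => cens df T (fun i => W i ω)) v := by
  intro x v
  by_cases hv : ∀ i, i ∉ T → v i = df i
  · have hvb : v a = df a := hv a ha
    have hxv : (x, v) = (fun u : ∀ i, A i => (u a, Function.update u a (df a)))
        (Function.update v a x) := by
      refine Prod.ext ?_ ?_
      · show x = Function.update v a x a
        rw [Function.update_self]
      · show v = Function.update (Function.update v a x) a (df a)
        symm
        rw [Function.update_idem, ← hvb, Function.update_eq_self]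
    rw [cens_insert df W ha, hxv,
      dist_comp_inj P (fun ω => cens df (insert a T) fun i => W i ω)
        (update_pair_inj df a) (Function.update v a x),
      dist_cens hP1 W hindep df (insert a T) _ ?_,
      dist_cens hP1 W hindep df T v hv]
    · rw [Finset.prod_insert ha, Function.update_self]
      congr 1
      refine Finset.prod_congr rfl fun i hi => ?_
      rw [Function.update_of_ne (fun hia => ha (by rw [← hia]; exact hi))]
    · intro i hi
      have hia : i ≠ a := fun hia => hi (hia ▸ Finset.mem_insert_self a T)
      rw [Function.update_of_ne hia]
      exact hv i fun hiT => hi (Finset.mem_insert_of_mem hiT)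
  · rw [dist_cens_vanish df T W hv, mul_zero]
    unfold dist
    refine Finset.sum_eq_zero fun ω _ => ?_
    rw [if_neg]
    intro h
    have h2 : cens df T (fun i => W i ω) = v := congrArg Prod.snd h
    refine hv fun i hi => ?_
    rw [← h2]
    simp [cens, hi]

include instF in
lemma indep_W_W (hP1 : ∑ ω, P ω = 1) (W : ∀ i, Ω → A i)
    (hindep : ∀ w : ∀ i, A i,
      dist P (fun ω => fun i => W i ω) w = ∏ i, dist P (W i) (w i))
    (df : ∀ i, A i) {d1 d2 : Fin D} (h12 : d1 ≠ d2) :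
    ∀ x y, dist P (fun ω => (W d1 ω, W d2 ω)) (x, y)
      = dist P (W d1) x * dist P (W d2) y := by
  intro x y
  set j : A d2 → ∀ i, A i := fun y => Function.update df d2 y with hj
  have hjinj : Function.Injective j := by
    intro y y' h
    have := congrFun h d2
    simp only [hj, Function.update_self] at this
    exact this
  have hfun : ∀ ω, cens df {d2} (fun i => W i ω) = j (W d2 ω) := by
    intro ω
    funext i
    by_cases hid : i = d2
    · subst hid
      simp [cens, hj]
    · simp [cens, hj, hid, Function.update_of_ne hid]
  have hpair := indep_W_cens hP1 W hindep df
    (show d1 ∉ ({d2} : Finset (Fin D)) by simp [h12]) x (j y)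
  simp only [hfun] at hpair
  have e1 : dist P (fun ω => (W d1 ω, j (W d2 ω))) (x, j y)
      = dist P (fun ω => (W d1 ω, W d2 ω)) (x, y) :=
    dist_comp_inj P (fun ω => (W d1 ω, W d2 ω)) (g := Prod.map id j)
      (Function.injective_id.prodMap hjinj) (x, y)
  have e2 : dist P (fun ω => j (W d2 ω)) (j y) = dist P (W d2) y :=
    dist_comp_inj P (W d2) hjinj y
  rw [e1, e2] at hpair
  exact hpair

include instF in
lemma sum_mutInfo_le {C : Type*} [Fintype C] [DecidableEq C]
    (hP0 : ∀ ω, 0 ≤ P ω) (hP1 : ∑ ω, P ω = 1) (W : ∀ i, Ω → A i)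
    (hindep : ∀ w : ∀ i, A i,
      dist P (fun ω => fun i => W i ω) w = ∏ i, dist P (W i) (w i))
    (df : ∀ i, A i) (S' : Ω → C) (T : Finset (Fin D)) :
    ∑ d ∈ T, mutInfo P (W d) S'
      ≤ mutInfo P (fun ω => cens df T (fun i => W i ω)) S' := by
  induction T using Finset.induction_on with
  | empty =>
    simpa using mutInfo_nonneg hP0 hP1 (fun ω => cens df ∅ (fun i => W i ω)) S'
  | @insert a T ha ih =>
    rw [Finset.sum_insert ha]
    have hpair := indep_W_cens hP1 W hindep df ha
    have hsup := mutInfo_superadd hP0 hP1 (X := W a)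
      (Y := fun ω => cens df T (fun i => W i ω)) (fun x v => hpair x v) S'
    have heq : mutInfo P (fun ω => (W a ω, cens df T (fun i => W i ω))) S'
        = mutInfo P (fun ω => cens df (insert a T) (fun i => W i ω)) S' := by
      rw [cens_insert df W ha]
      exact mutInfo_comp_inj_left (update_pair_inj df a) _ S'
    linarith

end Tuple

end InfoTheory

open InfoTheory in
/-- Let `D ≥ 2` and let `W₁, …, W_D` be mutually independent finite-valued random
variables and `S` any finite-valued random variable on a common finite probability
space.  Then the sum over all ordered pairs `(d₁, d₂)` with `d₁ ≠ d₂` of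
`I((W_{d₁}, W_{d₂}); S)` is at most `(2D - 1) H(S)`. -/
theorem sum_pair_mutInfo_le_entropy {Ω : Type*} [Fintype Ω] {D : ℕ} (hD : 2 ≤ D)
    {A : Fin D → Type*} [∀ i, Fintype (A i)] [∀ i, DecidableEq (A i)]
    {B : Type*} [Fintype B] [DecidableEq B]
    (P : Ω → ℝ) (hP0 : ∀ ω, 0 ≤ P ω) (hP1 : ∑ ω, P ω = 1)
    (W : ∀ i, Ω → A i) (S : Ω → B)
    (hindep : ∀ w : ∀ i, A i,
      dist P (fun ω => fun i => W i ω) w = ∏ i, dist P (W i) (w i)) :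
    ∑ d1 : Fin D, ∑ d2 : Fin D,
        (if d1 ≠ d2 then mutInfo P (fun ω => (W d1 ω, W d2 ω)) S else 0)
      ≤ (2 * (D : ℝ) - 1) * entropy P S := by
  classical
  have hΩ : Nonempty Ω := by
    by_contra h
    rw [not_nonempty_iff] at h
    haveI := h
    rw [Finset.univ_eq_empty] at hP1
    simp at hP1
  obtain ⟨ω0⟩ := hΩ
  set df : ∀ i, A i := fun i => W i ω0 with hdf
  have hstep1 : ∀ d1 : Fin D,
      ∑ d2 : Fin D, (if d1 ≠ d2 then mutInfo P (fun ω => (W d1 ω, W d2 ω)) S else 0)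
        = ∑ d2 ∈ Finset.univ.erase d1, mutInfo P (fun ω => (W d1 ω, W d2 ω)) S := by
    intro d1
    rw [← Finset.sum_filter]
    congr 1
    ext d2
    simp [Finset.mem_erase, ne_comm]
  have hper : ∀ d1 : Fin D,
      ∑ d2 ∈ Finset.univ.erase d1, mutInfo P (fun ω => (W d1 ω, W d2 ω)) S
        ≤ ((D : ℝ) - 1) * mutInfo P (W d1) S + entropy P S := by
    intro d1
    have hE : ∀ d2 ∈ Finset.univ.erase d1,
        mutInfo P (fun ω => (W d1 ω, W d2 ω)) S
          = mutInfo P (W d1) S + mutInfo P (W d2) (fun ω => (S ω, W d1 ω)) := by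
      intro d2 hd2
      have h12 : d1 ≠ d2 := Ne.symm (Finset.mem_erase.mp hd2).1
      exact mutInfo_pair_decomp hP1 S (indep_W_W hP1 W hindep df h12)
    rw [Finset.sum_congr rfl hE, Finset.sum_add_distrib, Finset.sum_const]
    have hcard : (Finset.univ.erase d1).card = D - 1 := by
      rw [Finset.card_erase_of_mem (Finset.mem_univ d1), Finset.card_univ, Fintype.card_fin]
    have hcast : (((Finset.univ.erase d1).card : ℕ) : ℝ) = (D : ℝ) - 1 := by
      rw [hcard, Nat.cast_sub (by omega)]
      simp
    have hsum2 : ∑ d2 ∈ Finset.univ.erase d1, mutInfo P (W d2) (fun ω => (S ω, W d1 ω))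
        ≤ entropy P S := by
      refine le_trans (sum_mutInfo_le hP0 hP1 W hindep df (fun ω => (S ω, W d1 ω))
        (Finset.univ.erase d1)) ?_
      refine mutInfo_pair_le hP0 hP1 (S := S) (Y := W d1)
        (X := fun ω => cens df (Finset.univ.erase d1) (fun i => W i ω)) ?_
      exact indep_swap (fun x v =>
        indep_W_cens hP1 W hindep df (Finset.notMem_erase d1 Finset.univ) x v)
    rw [nsmul_eq_mul, hcast]
    linarith
  have hsumI : ∑ d1, mutInfo P (W d1) S ≤ entropy P S := by
    refine le_trans (sum_mutInfo_le hP0 hP1 W hindep df S Finset.univ) ?_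
    exact mutInfo_le_entropy_right hP0 _ S
  have hD1 : (0 : ℝ) ≤ (D : ℝ) - 1 := by
    have h2 : (2 : ℝ) ≤ (D : ℝ) := by exact_mod_cast hD
    linarith
  calc ∑ d1 : Fin D, ∑ d2 : Fin D,
        (if d1 ≠ d2 then mutInfo P (fun ω => (W d1 ω, W d2 ω)) S else 0)
      = ∑ d1 : Fin D, ∑ d2 ∈ Finset.univ.erase d1,
          mutInfo P (fun ω => (W d1 ω, W d2 ω)) S :=
        Finset.sum_congr rfl fun d1 _ => hstep1 d1
    _ ≤ ∑ d1 : Fin D, (((D : ℝ) - 1) * mutInfo P (W d1) S + entropy P S) :=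
        Finset.sum_le_sum fun d1 _ => hper d1
    _ = ((D : ℝ) - 1) * (∑ d1, mutInfo P (W d1) S) + (D : ℝ) * entropy P S := by
        rw [Finset.sum_add_distrib, ← Finset.mul_sum, Finset.sum_const, Finset.card_univ,
          Fintype.card_fin, nsmul_eq_mul]
    _ ≤ ((D : ℝ) - 1) * entropy P S + (D : ℝ) * entropy P S := by
        have := mul_le_mul_of_nonneg_left hsumI hD1
        linarith
    _ = (2 * (D : ℝ) - 1) * entropy P S := by ring
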